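/- arXiv:2009.08222 — 3 statements merged into one kernel-verified Lean document; each statement's English description precedes it below -/
import Mathlib

section
/- For every integer m ≥ 4, A(2F_{m−1}) = A(F_{m−3}) + A(F_{m−1}) + 2^{m−3} − 1. -/
/-!
`A H` counts the sets of distinct Fibonacci numbers with sum at most `H`. Write
`a, b, c, d = F (m-3), …, F m`, so that `2c = a + d`. A set with sum at most `2c` uses only
`F 2, …, F m`; sorting by whether it contains `d`, and then `c`, gives
`A (2c) = A a + #{T ⊆ {F 2, …, F (m-2)} | ∑ T ≤ c} + 2 ^ (m-3)`, the last term counting all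
subsets of `{F 2, …, F (m-2)}` since their total `d - 2` is below `2c`. The middle term is
`A c - 1`: it misses only the set `{c}`.
-/

/-- A natural number is a Fibonacci number, i.e. equals `F m` for some `m ≥ 1`
(with `F 1 = F 2 = 1`). -/
def IsFibNum (x : ℕ) : Prop := ∃ m : ℕ, 0 < m ∧ Nat.fib m = x

/-- `R n` counts the partitions of `n` into distinct Fibonacci numbers:
the number of finite sets of Fibonacci numbers with sum `n` (so `R 0 = 1`). -/
noncomputable def R (n : ℕ) : ℕ :=
  Nat.card {S : Finset ℕ // (∀ x ∈ S, IsFibNum x) ∧ (∑ x ∈ S, x) = n}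

/-- The summatory function `A H = ∑_{n=0}^{H} R n`. -/
noncomputable def A (H : ℕ) : ℕ := ∑ n ∈ Finset.range (H + 1), R n

open Finset

def subsetSumCount (U : Finset ℕ) (H : ℕ) : ℕ := #{S ∈ U.powerset | ∑ x ∈ S, x ≤ H}

lemma subsetSumCount_insert_add {U : Finset ℕ} {a : ℕ} (ha : a ∉ U) (H : ℕ) :
    subsetSumCount (insert a U) (H + a) = subsetSumCount U (H + a) + subsetSumCount U H := by
  simp only [subsetSumCount, card_filter, sum_powerset_insert ha]
  congr 1
  refine sum_congr rfl fun T hT => ?_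
  simp only [sum_insert fun h => ha (mem_powerset.mp hT h), add_comm a (∑ x ∈ T, x),
    add_le_add_iff_right]

lemma subsetSumCount_of_sum_le {U : Finset ℕ} {H : ℕ} (h : ∑ x ∈ U, x ≤ H) :
    subsetSumCount U H = 2 ^ #U := by
  rw [subsetSumCount, filter_true_of_mem, card_powerset]
  exact fun S hS => (sum_le_sum_of_subset (mem_powerset.mp hS)).trans h

lemma subsetSumCount_zero {U : Finset ℕ} (hU : 0 ∉ U) : subsetSumCount U 0 = 1 := by
  rw [subsetSumCount, card_eq_one]
  refine ⟨∅, eq_singleton_iff_unique_mem.mpr ⟨by simp, fun S hS => ?_⟩⟩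
  obtain ⟨hSU, hsum⟩ := mem_filter.mp hS
  rw [nonpos_iff_eq_zero, sum_eq_zero_iff] at hsum
  exact eq_empty_of_forall_notMem fun x hx => hU (hsum x hx ▸ mem_powerset.mp hSU hx)

/-- Indices start at `2` because `F 1 = F 2`. -/
def fibSet (j : ℕ) : Finset ℕ := (Icc 2 j).image Nat.fib

lemma mem_fibSet {j x : ℕ} : x ∈ fibSet j ↔ IsFibNum x ∧ x < Nat.fib (j + 1) := by
  simp only [fibSet, mem_image, mem_Icc]
  constructor
  · rintro ⟨i, ⟨hi2, hij⟩, rfl⟩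
    exact ⟨⟨i, by omega, rfl⟩, (Nat.fib_lt_fib hi2).mpr (by omega)⟩
  · rintro ⟨⟨i, hi, rfl⟩, hlt⟩
    obtain ⟨i', hi'2, hfib⟩ : ∃ i', 2 ≤ i' ∧ Nat.fib i' = Nat.fib i := by
      rcases (show i = 1 ∨ 2 ≤ i by omega) with rfl | hi2
      · exact ⟨2, le_rfl, rfl⟩
      · exact ⟨i, hi2, rfl⟩
    rw [← hfib, Nat.fib_lt_fib hi'2] at hlt
    exact ⟨i', ⟨hi'2, by omega⟩, hfib⟩

lemma fib_succ_notMem_fibSet (j : ℕ) : Nat.fib (j + 1) ∉ fibSet j :=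
  fun h => lt_irrefl _ (mem_fibSet.mp h).2

lemma zero_notMem_fibSet (j : ℕ) : 0 ∉ fibSet j := fun h => by
  obtain ⟨⟨i, hi, hfib⟩, -⟩ := mem_fibSet.mp h
  exact (Nat.fib_pos.mpr hi).ne' hfib

lemma fibSet_succ {j : ℕ} (hj : 1 ≤ j) : fibSet (j + 1) = insert (Nat.fib (j + 1)) (fibSet j) := by
  rw [fibSet, fibSet, ← image_insert, ← Order.succ_eq_add_one,
    insert_Icc_right_eq_Icc_succ (by simpa using hj)]

lemma card_fibSet (j : ℕ) : #(fibSet j) = j - 1 := by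
  rw [fibSet, card_image_of_injOn (Nat.fib_strictMonoOn.injOn.mono fun i hi => (mem_Icc.mp hi).1),
    Nat.card_Icc]
  omega

lemma sum_fibSet_add_two {j : ℕ} (hj : 1 ≤ j) : ∑ x ∈ fibSet j, x + 2 = Nat.fib (j + 2) := by
  induction j, hj using Nat.le_induction with
  | base => rfl
  | succ j hj ih =>
    rw [fibSet_succ hj, sum_insert (fib_succ_notMem_fibSet j), add_assoc, ih]
    exact Nat.fib_add_two.symm

lemma subsetSumCount_fibSet_succ {j : ℕ} (hj : 1 ≤ j) (H : ℕ) :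
    subsetSumCount (fibSet (j + 1)) (H + Nat.fib (j + 1)) =
      subsetSumCount (fibSet j) (H + Nat.fib (j + 1)) + subsetSumCount (fibSet j) H := by
  rw [fibSet_succ hj, subsetSumCount_insert_add (fib_succ_notMem_fibSet j)]

lemma R_eq_card_fibSet {n j : ℕ} (hn : n < Nat.fib (j + 1)) :
    R n = #{S ∈ (fibSet j).powerset | ∑ x ∈ S, x = n} := by
  rw [R, ← Nat.card_eq_finsetCard]
  refine Nat.card_congr (Equiv.subtypeEquivRight fun S => ?_)
  rw [mem_filter, mem_powerset]
  constructor
  · rintro ⟨hfib, rfl⟩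
    exact ⟨fun x hx => mem_fibSet.mpr ⟨hfib x hx, (single_le_sum (by simp) hx).trans_lt hn⟩, rfl⟩
  · rintro ⟨hS, rfl⟩
    exact ⟨fun x hx => (mem_fibSet.mp (hS hx)).1, rfl⟩

lemma A_eq_subsetSumCount_fibSet {H j : ℕ} (hH : H < Nat.fib (j + 1)) :
    A H = subsetSumCount (fibSet j) H := by
  rw [subsetSumCount, card_eq_sum_card_fiberwise (f := fun S => ∑ x ∈ S, x) (t := range (H + 1))
    fun S hS => mem_range.mpr (Nat.lt_succ_of_le (mem_filter.mp hS).2), A]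
  refine sum_congr rfl fun n hn => ?_
  have hnH : n ≤ H := Nat.lt_succ_iff.mp (mem_range.mp hn)
  rw [R_eq_card_fibSet (hnH.trans_lt hH), filter_filter]
  exact congrArg card (filter_congr fun S _ => ⟨fun h => ⟨h.le.trans hnH, h⟩, And.right⟩)

lemma A_two_mul_fib_add_one (k : ℕ) :
    A (2 * Nat.fib (k + 3)) + 1 = A (Nat.fib (k + 1)) + A (Nat.fib (k + 3)) + 2 ^ (k + 1) := by
  set a := Nat.fib (k + 1)
  set b := Nat.fib (k + 2)
  set c := Nat.fib (k + 3)
  set d := Nat.fib (k + 4)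
  have hb : 0 < b := Nat.fib_pos.mpr (by omega)
  have hc : c = a + b := Nat.fib_add_two
  have hd : d = b + c := Nat.fib_add_two
  have he : Nat.fib (k + 5) = c + d := Nat.fib_add_two
  have hA2c : A (2 * c) = subsetSumCount (fibSet (k + 4)) (a + d) := by
    rw [show 2 * c = a + d by omega]
    exact A_eq_subsetSumCount_fibSet (show a + d < Nat.fib (k + 5) by omega)
  have hsplit_d : subsetSumCount (fibSet (k + 4)) (a + d) =
      subsetSumCount (fibSet (k + 3)) (c + c) + subsetSumCount (fibSet (k + 3)) a := by
    rw [show c + c = a + d by omega]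
    exact subsetSumCount_fibSet_succ (j := k + 3) (by omega) a
  have hsplit_c : subsetSumCount (fibSet (k + 3)) (c + c) =
      subsetSumCount (fibSet (k + 2)) (c + c) + subsetSumCount (fibSet (k + 2)) c :=
    subsetSumCount_fibSet_succ (j := k + 2) (by omega) c
  have hAa : A a = subsetSumCount (fibSet (k + 3)) a :=
    A_eq_subsetSumCount_fibSet (show a < d by omega)
  have hAc : A c = subsetSumCount (fibSet (k + 2)) c + 1 := by
    have h : subsetSumCount (fibSet (k + 3)) (0 + c) =
        subsetSumCount (fibSet (k + 2)) (0 + c) + subsetSumCount (fibSet (k + 2)) 0 :=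
      subsetSumCount_fibSet_succ (by omega) 0
    rw [zero_add, subsetSumCount_zero (zero_notMem_fibSet _)] at h
    rw [A_eq_subsetSumCount_fibSet (show c < Nat.fib (k + 4) by omega), h]
  have hfull : subsetSumCount (fibSet (k + 2)) (c + c) = 2 ^ (k + 1) := by
    have hsum : ∑ x ∈ fibSet (k + 2), x + 2 = d := sum_fibSet_add_two (by omega)
    rw [subsetSumCount_of_sum_le (by omega), card_fibSet]
    rfl
  omega

/-- `A(2F_{m-1}) = A(F_{m-3}) + A(F_{m-1}) + 2^{m-3} - 1` for `m ≥ 4`. -/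
theorem summatory_at_two_fib (m : ℕ) (hm : 4 ≤ m) :
    (A (2 * Nat.fib (m - 1)) : ℤ) =
      (A (Nat.fib (m - 3)) : ℤ) + (A (Nat.fib (m - 1)) : ℤ) + 2 ^ (m - 3) - 1 := by
  obtain ⟨k, rfl⟩ : ∃ k, m = k + 4 := ⟨m - 4, by omega⟩
  have key := congrArg (Nat.cast : ℕ → ℤ) (A_two_mul_fib_add_one k)
  push_cast at key
  rw [show k + 4 - 1 = k + 3 from rfl, show k + 4 - 3 = k + 1 from rfl]
  linarith
end

section
/- As m → ∞, A(2F_{m−1}) is asymptotic to (11/48)·2^m; that is, lim_{m→∞} A(2F_{m−1})/2^m = 11/48. Consequently lim_{m→∞} A(2F_{m−1})/(2F_{m−1})^λ = (11/24)·(√5/2)^λ. -/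
open scoped BigOperators
open Filter Topology

/-!
Since `F 1 = F 2`, a set of Fibonacci numbers is a set of distinct values `F 2 < F 3 < ⋯`, and when
`H < F (n + 2)` only `F 2, …, F (n + 1)` can occur. So `A H` counts the subsets of `{0, …, n - 1}`
of weight `∑ F (i + 2)` at most `H`. Splitting off the largest index gives recurrences which
evaluate `A (2 F (m - 1))` exactly: `48 A (2 F (m - 1)) = 11·2^m + 48 m + 16 (m % 2) - 128` for
`m ≥ 5`. The second limit then follows from Binet's formula `F n ~ φ^n / √5` and `φ^λ = 2`.
-/

open Finset
open Nat (fib fib_add_two fib_pos fib_add_two_strictMono)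

def fibAddTwoEmb : ℕ ↪ ℕ := ⟨fun i => fib (i + 2), fib_add_two_strictMono.injective⟩

@[simp] lemma fibAddTwoEmb_apply (i : ℕ) : fibAddTwoEmb i = fib (i + 2) := rfl

lemma mem_map_fibAddTwoEmb_range {n x : ℕ} (hx : IsFibNum x) (hxn : x < fib (n + 2)) :
    x ∈ (range n).map fibAddTwoEmb := by
  obtain ⟨j, hj, rfl⟩ := hx
  obtain ⟨i, hi⟩ : ∃ i, fib (i + 2) = fib j :=
    if h : j = 1 then ⟨0, by rw [h]; rfl⟩ else ⟨j - 2, by congr 1; omega⟩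
  rw [← hi] at hxn ⊢
  exact mem_map_of_mem _ (mem_range.2 (fib_add_two_strictMono.lt_iff_lt.1 hxn))

lemma R_eq_card_filter {n k : ℕ} (hk : k < fib (n + 2)) :
    R k = #{T ∈ (range n).powerset | ∑ i ∈ T, fib (i + 2) = k} := by
  rw [R, ← card_map (mapEmbedding fibAddTwoEmb).toEmbedding, ← Nat.card_eq_finsetCard]
  refine Nat.card_congr (Equiv.subtypeEquivRight fun S => ?_)
  simp only [Finset.mem_map, mem_filter, mem_powerset, RelEmbedding.coe_toEmbedding,
    mapEmbedding_apply]
  constructor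
  · rintro ⟨hfib, rfl⟩
    obtain ⟨T, hT, rfl⟩ := subset_map_iff.1 fun x hx => mem_map_fibAddTwoEmb_range (hfib x hx)
      ((single_le_sum (fun _ _ => Nat.zero_le _) hx).trans_lt hk)
    exact ⟨T, ⟨hT, by simp⟩, rfl⟩
  · rintro ⟨T, ⟨-, rfl⟩, rfl⟩
    refine ⟨fun x hx => ?_, by simp⟩
    obtain ⟨i, -, rfl⟩ := Finset.mem_map.1 hx
    exact ⟨i + 2, by omega, rfl⟩

def fibSubsetCount (n B : ℕ) : ℕ := #{T ∈ (range n).powerset | ∑ i ∈ T, fib (i + 2) ≤ B}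

lemma A_eq_fibSubsetCount {n H : ℕ} (hH : H < fib (n + 2)) : A H = fibSubsetCount n H := by
  rw [fibSubsetCount, card_eq_sum_card_fiberwise (t := range (H + 1))
    (f := fun T => ∑ i ∈ T, fib (i + 2)) fun T hT => mem_range_succ_iff.2 (mem_filter.1 hT).2, A]
  refine sum_congr rfl fun k hk => ?_
  have hkH := mem_range_succ_iff.1 hk
  rw [R_eq_card_filter (hkH.trans_lt hH), filter_filter]
  exact congrArg card (filter_congr fun T _ => ⟨fun h => ⟨h.trans_le hkH, h⟩, And.right⟩)

lemma card_filter_powerset_insert {α : Type*} [DecidableEq α] {s : Finset α} {a : α} (ha : a ∉ s)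
    (w : α → ℕ) (B : ℕ) :
    #{T ∈ (insert a s).powerset | ∑ i ∈ T, w i ≤ B} =
      #{T ∈ s.powerset | ∑ i ∈ T, w i ≤ B} + #{T ∈ s.powerset | ∑ i ∈ T, w i + w a ≤ B} := by
  simp only [card_filter, sum_powerset_insert ha]
  refine congrArg _ (sum_congr rfl fun T hT => ?_)
  rw [sum_insert fun h => ha (mem_powerset.1 hT h), add_comm]

lemma fibSubsetCount_succ (n B : ℕ) :
    fibSubsetCount (n + 1) B = fibSubsetCount n B +
      #{T ∈ (range n).powerset | ∑ i ∈ T, fib (i + 2) + fib (n + 2) ≤ B} := by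
  rw [fibSubsetCount, range_add_one, card_filter_powerset_insert notMem_range_self]
  rfl

lemma fibSubsetCount_succ_of_add {n B C : ℕ} (h : C + fib (n + 2) = B) :
    fibSubsetCount (n + 1) B = fibSubsetCount n B + fibSubsetCount n C := by
  rw [fibSubsetCount_succ, fibSubsetCount]
  exact congrArg _ (congrArg card (filter_congr fun T _ => by omega))

lemma fibSubsetCount_succ_of_lt {n B : ℕ} (h : B < fib (n + 2)) :
    fibSubsetCount (n + 1) B = fibSubsetCount n B := by
  rw [fibSubsetCount_succ, filter_false_of_mem fun T _ => by omega, card_empty, add_zero]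

lemma fibSubsetCount_zero_left (B : ℕ) : fibSubsetCount 0 B = 1 := by
  rw [fibSubsetCount, range_zero, powerset_empty, filter_singleton, sum_empty,
    if_pos (Nat.zero_le B), card_singleton]

lemma fibSubsetCount_zero_right (n : ℕ) : fibSubsetCount n 0 = 1 := by
  induction n with
  | zero => exact fibSubsetCount_zero_left 0
  | succ n ih => rwa [fibSubsetCount_succ_of_lt (fib_pos.2 (by omega))]

-- `∑_{i < n} F (i + 2) = F (n + 3) - 2`, so `B` bounds the weight of every subset.
lemma fibSubsetCount_eq_two_pow {n B : ℕ} (h : fib (n + 3) ≤ B + 2) :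
    fibSubsetCount n B = 2 ^ n := by
  induction n generalizing B with
  | zero => exact fibSubsetCount_zero_left B
  | succ n ih =>
    replace h : fib (n + 4) ≤ B + 2 := h
    have h4 : fib (n + 4) = fib (n + 2) + fib (n + 3) := fib_add_two
    have h3 : fib (n + 3) = fib (n + 1) + fib (n + 2) := fib_add_two
    have : 0 < fib (n + 1) := fib_pos.2 (by omega)
    rw [fibSubsetCount_succ_of_add (Nat.sub_add_cancel (by omega)), ih (by omega), ih (by omega),
      pow_succ, mul_two]

lemma fibSubsetCount_add_two_fib (n : ℕ) :
    fibSubsetCount (n + 2) (fib (n + 4)) = 2 ^ (n + 1) + fibSubsetCount n (fib (n + 2)) + 1 := by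
  have h4 : fib (n + 2) + fib (n + 3) = fib (n + 4) := fib_add_two.symm
  rw [fibSubsetCount_succ_of_add h4, fibSubsetCount_eq_two_pow (Nat.le_add_right _ 2),
    fibSubsetCount_succ_of_add (zero_add (fib (n + 2))), fibSubsetCount_zero_right]
  ring

lemma six_mul_fibSubsetCount_fib (n : ℕ) :
    6 * fibSubsetCount n (fib (n + 2)) + 2 = 2 ^ (n + 2) + 3 * (n + 1) + (n + 1) % 2 := by
  induction n using Nat.twoStepInduction with
  | zero => rw [fibSubsetCount_zero_left]; rfl
  | one => rw [fibSubsetCount_eq_two_pow le_add_self]; rfl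
  | more n ih _ =>
    rw [fibSubsetCount_add_two_fib, pow_succ, pow_add 2 n 4] at *
    omega

lemma fibSubsetCount_add_four_two_mul_fib (n : ℕ) :
    fibSubsetCount (n + 4) (2 * fib (n + 4)) =
      2 ^ (n + 2) + fibSubsetCount (n + 2) (fib (n + 4)) + fibSubsetCount n (fib (n + 2)) + 1 := by
  have h5 : fib (n + 3) + fib (n + 4) = fib (n + 5) := fib_add_two.symm
  have h4 : fib (n + 2) + fib (n + 3) = fib (n + 4) := fib_add_two.symm
  have h23 : fib (n + 2) < fib (n + 3) := fib_add_two_strictMono (by omega)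
  rw [fibSubsetCount_succ_of_add (show fib (n + 2) + fib (n + 5) = 2 * fib (n + 4) by omega),
    fibSubsetCount_succ_of_add (two_mul (fib (n + 4))).symm,
    fibSubsetCount_eq_two_pow (show fib (n + 5) ≤ 2 * fib (n + 4) + 2 by omega),
    fibSubsetCount_succ_of_lt (show fib (n + 2) < fib (n + 4) by omega),
    fibSubsetCount_succ_of_lt h23,
    fibSubsetCount_succ_of_add (zero_add (fib (n + 2))), fibSubsetCount_zero_right]
  ring

lemma six_mul_A_two_mul_fib (n : ℕ) :
    6 * A (2 * fib (n + 4)) = 11 * 2 ^ (n + 2) + 6 * n + 14 + 2 * ((n + 1) % 2) := by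
  have h45 : fib (n + 4) < fib (n + 5) := fib_add_two_strictMono (by omega)
  have h6 : fib (n + 6) = fib (n + 4) + fib (n + 5) := fib_add_two
  have hW := six_mul_fibSubsetCount_fib n
  have hW' : 6 * fibSubsetCount (n + 2) (fib (n + 4)) + 2 =
      2 ^ (n + 2 + 2) + 3 * (n + 3) + (n + 3) % 2 := six_mul_fibSubsetCount_fib (n + 2)
  rw [A_eq_fibSubsetCount (show 2 * fib (n + 4) < fib (n + 6) by omega),
    fibSubsetCount_add_four_two_mul_fib]
  rw [pow_add 2 (n + 2) 2] at hW'
  omega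

lemma abs_A_two_mul_fib_sub_le {m : ℕ} (hm : 5 ≤ m) :
    |(A (2 * fib (m - 1)) : ℝ) - 11 / 48 * 2 ^ m| ≤ m := by
  obtain ⟨n, rfl⟩ := Nat.exists_eq_add_of_le' hm
  have hA : (6 * A (2 * fib (n + 4)) : ℝ) =
      11 * 2 ^ (n + 2) + 6 * n + 14 + 2 * ((n + 1) % 2 : ℕ) := by
    exact_mod_cast six_mul_A_two_mul_fib n
  have hmod : ((n + 1) % 2 : ℕ) ≤ (1 : ℝ) := by
    exact_mod_cast Nat.le_of_lt_succ (Nat.mod_lt _ two_pos)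
  have hmod' : (0 : ℝ) ≤ ((n + 1) % 2 : ℕ) := Nat.cast_nonneg _
  rw [show n + 5 - 1 = n + 4 from rfl, abs_le, pow_add _ (n + 2) 3]
  push_cast
  constructor <;> linarith

lemma tendsto_div_pow_of_sub_isBigO {r c : ℝ} (hr : 1 < r) {a : ℕ → ℝ}
    (h : (fun m => a m - c * r ^ m) =O[atTop] (fun m => (m : ℝ))) :
    Tendsto (fun m => a m / r ^ m) atTop (𝓝 c) := by
  have h0 := (h.trans_isLittleO (isLittleO_coe_const_pow_of_one_lt hr)).tendsto_div_nhds_zero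
  rw [← add_zero c]
  refine (h0.const_add c).congr fun m => ?_
  have : r ^ m ≠ 0 := pow_ne_zero m (zero_lt_one.trans hr).ne'
  field_simp
  ring

section GoldenRatio

open Real
open scoped goldenRatio

lemma tendsto_fib_div_goldenRatio_pow :
    Tendsto (fun n => (fib n : ℝ) / φ ^ n) atTop (𝓝 (√5)⁻¹) := by
  have h₁ n : (fib n : ℝ) / φ ^ n = (1 - (ψ / φ) ^ n) / √5 := by
    rw [coe_fib_eq, div_pow ψ φ n, one_sub_div (pow_ne_zero n goldenRatio_ne_zero), div_right_comm]
  have h₂ := tendsto_pow_atTop_nhds_zero_of_abs_lt_one (r := ψ / φ) <| by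
    rw [abs_div, div_lt_one <| by positivity, abs_of_pos goldenRatio_pos, abs_lt]
    ring_nf
    bound
  simpa [funext h₁] using (h₂.const_sub 1).div_const √5

lemma pow_rpow_logb {b y : ℝ} (hb : 0 < b) (hb1 : b ≠ 1) (hy : 0 < y) (n : ℕ) :
    (b ^ n) ^ logb b y = y ^ n := by
  rw [← rpow_pow_comm hb.le, rpow_logb hb hb1 hy]

lemma tendsto_two_fib_pred_rpow_div_two_pow :
    Tendsto (fun m : ℕ => ((2 * fib (m - 1) : ℕ) : ℝ) ^ logb φ 2 / 2 ^ m) atTop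
      (𝓝 ((2 / √5) ^ logb φ 2 / 2)) := by
  have key : Tendsto (fun n : ℕ => (2 * (fib n / φ ^ n)) ^ logb φ 2 / 2) atTop
      (𝓝 ((2 / √5) ^ logb φ 2 / 2)) := by
    rw [div_eq_mul_inv 2 √5]
    exact ((tendsto_fib_div_goldenRatio_pow.const_mul 2).rpow_const
      (Or.inl (by positivity))).div_const 2
  refine (key.comp (tendsto_sub_atTop_nat 1)).congr' ?_
  filter_upwards [eventually_ge_atTop 1] with m hm
  obtain ⟨n, rfl⟩ := Nat.exists_eq_add_of_le' hm
  rw [Function.comp_apply, Nat.add_sub_cancel, mul_div_assoc',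
    div_rpow (by positivity) (by positivity),
    pow_rpow_logb goldenRatio_pos one_lt_goldenRatio.ne' two_pos, pow_succ]
  push_cast
  field_simp

end GoldenRatio

/-- `A(2F_{m-1}) ~ (11/48)·2^m`, and hence `A(2F_{m-1})/(2F_{m-1})^λ → (11/24)(√5/2)^λ`. -/
theorem summatory_two_fib_asymptotic (φ lam : ℝ)
    (hφ : φ = (1 + Real.sqrt 5) / 2)
    (hlam : lam = Real.log 2 / Real.log φ) :
    Tendsto (fun m : ℕ => (A (2 * Nat.fib (m - 1)) : ℝ) / 2 ^ m) atTop
      (𝓝 (11 / 48)) ∧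
    Tendsto (fun m : ℕ =>
        (A (2 * Nat.fib (m - 1)) : ℝ) / ((2 * Nat.fib (m - 1) : ℕ) : ℝ) ^ lam) atTop
      (𝓝 ((11 / 24) * (Real.sqrt 5 / 2) ^ lam)) := by
  obtain rfl : lam = Real.logb Real.goldenRatio 2 := by rw [hlam, hφ, Real.log_div_log]
  have h1 : Tendsto (fun m : ℕ => (A (2 * fib (m - 1)) : ℝ) / 2 ^ m) atTop (𝓝 (11 / 48)) := by
    refine tendsto_div_pow_of_sub_isBigO one_lt_two (Asymptotics.IsBigO.of_bound 1 ?_)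
    filter_upwards [eventually_ge_atTop 5] with m hm
    simpa using abs_A_two_mul_fib_sub_le hm
  refine ⟨h1, ?_⟩
  have h2 := h1.div tendsto_two_fib_pred_rpow_div_two_pow (by positivity)
  convert h2.congr fun m => div_div_div_cancel_right₀ (pow_ne_zero m two_ne_zero)
    (A (2 * fib (m - 1)) : ℝ) (((2 * fib (m - 1) : ℕ) : ℝ) ^ Real.logb Real.goldenRatio 2) using 2
  rw [show (2 : ℝ) / √5 = (√5 / 2)⁻¹ from (inv_div _ _).symm, Real.inv_rpow (by positivity)]
  field_simp
  ring
end

section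
/- Define B(H) = (log H)^{−1} · Σ_{1 ≤ n ≤ H} R(n)/n^λ for integers H ≥ 2. Then B(H) ≍ 1; that is, 0 < liminf_{H→∞} B(H) ≤ limsup_{H→∞} B(H) < ∞. -/
open scoped BigOperators
open Filter Topology

/-!
Cut the positive integers into the Fibonacci blocks `[F j, F (j+1))`. Since `φ ^ λ = 2` and
`F j ≍ φ ^ j`, on the `j`-th block `n ^ λ ≍ 2 ^ j`. A representation of a number below `F (j+1)`
uses only `F 2, …, F j`, so the block carries at most `2 ^ (j-1)` representations; conversely,
adjoining `F j` to any subset of `{F 2, …, F (j-3)}`, whose total is `F (j-1) - 2`, lands in the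
block, so it carries at least `2 ^ (j-4)`. Each block thus contributes between `1/16` and `2` to
`∑ R n / n ^ λ`, and the sum up to `H` is of the order of the number of blocks below `H`, that
is of `log H / log φ`.
-/

open Finset

lemma sum_Ico_eq_sum_range_sum_Ico {M : Type*} [AddCommMonoid M] (f : ℕ → M) {a : ℕ → ℕ}
    (ha : Monotone a) (k : ℕ) :
    ∑ n ∈ Ico (a 0) (a k), f n = ∑ j ∈ range k, ∑ n ∈ Ico (a j) (a (j + 1)), f n := by
  induction k with
  | zero => simp
  | succ k ih =>
    rw [sum_range_succ, ← ih, sum_Ico_consecutive f (ha k.zero_le) (ha k.le_succ)]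

lemma liminf_pos_and_limsup_lt_top_of_eventually_mem_Icc {ι : Type*} {l : Filter ι} [l.NeBot]
    {u : ι → ℝ} {c C : ℝ} (hc : 0 < c) (h : ∀ᶠ i in l, u i ∈ Set.Icc c C) :
    0 < liminf (fun i => (u i : EReal)) l ∧
    liminf (fun i => (u i : EReal)) l ≤ limsup (fun i => (u i : EReal)) l ∧
    limsup (fun i => (u i : EReal)) l < ⊤ := by
  have hlow : (c : EReal) ≤ liminf (fun i => (u i : EReal)) l :=
    le_liminf_of_le (h := h.mono fun i hi => EReal.coe_le_coe_iff.2 hi.1)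
  have hupp : limsup (fun i => (u i : EReal)) l ≤ C :=
    limsup_le_of_le (h := h.mono fun i hi => EReal.coe_le_coe_iff.2 hi.2)
  exact ⟨(EReal.coe_pos.2 hc).trans_le hlow, liminf_le_limsup, hupp.trans_lt (EReal.coe_lt_top C)⟩

section Representations
open Nat

/-- `{F 2, …, F k}`; starting at `F 2` avoids listing `F 1 = F 2` twice. -/
def fibsUpTo (k : ℕ) : Finset ℕ := (Icc 2 k).image fib

lemma isFibNum_of_mem_fibsUpTo {k x : ℕ} (hx : x ∈ fibsUpTo k) : IsFibNum x := by
  obtain ⟨m, hm, rfl⟩ := mem_image.mp hx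
  exact ⟨m, by grind, rfl⟩

lemma fibsUpTo_mono : Monotone fibsUpTo := fun _ _ h =>
  image_subset_image (Icc_subset_Icc_right h)

lemma fib_notMem_fibsUpTo {k m : ℕ} (h : k < m) : fib m ∉ fibsUpTo k := by
  simp only [fibsUpTo, mem_image, mem_Icc, not_exists, not_and]
  intro j hj hfib
  exact (fib_strictMonoOn (Set.mem_Ici.2 hj.1) (Set.mem_Ici.2 (by omega)) (by omega)).ne hfib

lemma card_fibsUpTo (k : ℕ) : #(fibsUpTo (k + 1)) = k := by
  rw [fibsUpTo, Finset.card_image_of_injOn (fib_strictMonoOn.injOn.mono fun j hj => ?_), card_Icc]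
  · omega
  · exact Set.mem_Ici.2 (mem_Icc.1 hj).1

lemma sum_fibsUpTo (k : ℕ) : ∑ x ∈ fibsUpTo (k + 1), x + 2 = fib (k + 3) := by
  induction k with
  | zero => rfl
  | succ k ih =>
    have hinsert : fibsUpTo (k + 2) = insert (fib (k + 2)) (fibsUpTo (k + 1)) := by
      rw [fibsUpTo, fibsUpTo, ← image_insert]
      exact congrArg _ (insert_Icc_right_eq_Icc_add_one (by omega)).symm
    have hfib : fib (k + 1 + 3) = fib (k + 2) + fib (k + 3) := fib_add_two
    rw [hinsert, sum_insert (fib_notMem_fibsUpTo (by omega)), hfib]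
    omega

lemma subset_fibsUpTo {k : ℕ} {S : Finset ℕ} (hS : ∀ x ∈ S, IsFibNum x)
    (hsum : ∑ x ∈ S, x < fib (k + 1)) : S ⊆ fibsUpTo k := by
  intro x hx
  obtain ⟨m, hm, rfl⟩ := hS x hx
  have hle : fib m < fib (k + 1) := (single_le_sum (fun _ _ => Nat.zero_le _) hx).trans_lt hsum
  refine mem_image.2 ⟨max m 2, mem_Icc.2 ⟨le_max_right _ _, ?_⟩, ?_⟩
  · by_contra! hk
    exact (fib_mono (Nat.succ_le_of_lt hk)).not_gt (by grind [fib_one, fib_two])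
  · rcases le_total m 2 with h | h
    · interval_cases m <;> rfl
    · rw [max_eq_left h]

lemma R_eq_card_filter_s18 {k n : ℕ} (hn : n < fib (k + 1)) :
    R n = #{S ∈ (fibsUpTo k).powerset | ∑ x ∈ S, x = n} := by
  rw [R, ← Nat.card_eq_finsetCard]
  refine Nat.card_congr (Equiv.subtypeEquivRight fun S => ?_)
  rw [mem_filter, mem_powerset]
  exact ⟨fun h => ⟨subset_fibsUpTo h.1 (h.2 ▸ hn), h.2⟩,
    fun h => ⟨fun x hx => isFibNum_of_mem_fibsUpTo (h.1 hx), h.2⟩⟩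

lemma sum_R_Ico_eq_card {a b k : ℕ} (hb : b ≤ fib (k + 1)) :
    ∑ n ∈ Ico a b, R n = #{S ∈ (fibsUpTo k).powerset | ∑ x ∈ S, x ∈ Ico a b} := by
  rw [card_eq_sum_card_fiberwise (s := {S ∈ (fibsUpTo k).powerset | ∑ x ∈ S, x ∈ Ico a b})
    (f := fun S => ∑ x ∈ S, x) (t := Ico a b) fun S hS => (mem_filter.1 hS).2]
  refine sum_congr rfl fun n hn => ?_
  rw [R_eq_card_filter_s18 ((mem_Ico.1 hn).2.trans_le hb), filter_filter]
  exact congrArg card (filter_congr fun S _ => by grind)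

lemma sum_R_Ico_fib_le_two_pow (k : ℕ) :
    ∑ n ∈ Ico (fib (k + 2)) (fib (k + 3)), R n ≤ 2 ^ (k + 1) := by
  calc ∑ n ∈ Ico (fib (k + 2)) (fib (k + 3)), R n
      = #{S ∈ (fibsUpTo (k + 2)).powerset | ∑ x ∈ S, x ∈ Ico (fib (k + 2)) (fib (k + 3))} :=
        sum_R_Ico_eq_card le_rfl
    _ ≤ #(fibsUpTo (k + 2)).powerset := card_filter_le _ _
    _ = 2 ^ (k + 1) := by rw [card_powerset, card_fibsUpTo]

lemma two_pow_le_sum_R_Ico_fib (k : ℕ) :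
    2 ^ k ≤ ∑ n ∈ Ico (fib (k + 4)) (fib (k + 5)), R n := by
  rw [sum_R_Ico_eq_card le_rfl, show 2 ^ k = #(fibsUpTo (k + 1)).powerset by
    rw [card_powerset, card_fibsUpTo]]
  have hnotMem : ∀ U ⊆ fibsUpTo (k + 1), fib (k + 4) ∉ U := fun U hU h =>
    fib_notMem_fibsUpTo (by omega) (hU h)
  refine card_le_card_of_injOn (insert (fib (k + 4))) (fun U hU => ?_) fun U hU V hV hUV => ?_
  · rw [coe_powerset, Set.mem_preimage, Set.mem_powerset_iff, coe_subset] at hU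
    have hsum := sum_le_sum_of_subset (f := fun x : ℕ => x) hU
    have htotal := sum_fibsUpTo k
    have hfib : fib (k + 4 + 1) = fib (k + 3) + fib (k + 4) := fib_add_two
    simp only [coe_filter, mem_powerset, Set.mem_ofPred_eq, sum_insert (hnotMem U hU), mem_Ico]
    refine ⟨insert_subset (mem_image.2 ⟨k + 4, by simp, rfl⟩)
      (hU.trans (fibsUpTo_mono (by omega))), by omega, by omega⟩
  · simp only [coe_powerset, Set.mem_preimage, Set.mem_powerset_iff, coe_subset] at hU hV
    rw [← erase_insert (hnotMem U hU), ← erase_insert (hnotMem V hV), hUV]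

end Representations

section Analytic
open Real
open scoped goldenRatio

lemma fib_succ_le_goldenRatio_pow (n : ℕ) : (Nat.fib (n + 1) : ℝ) ≤ φ ^ n := by
  have hψ : ψ < 0 := goldenConj_neg
  have hbinet := fib_succ_sub_goldenConj_mul_fib n
  nlinarith [(Nat.cast_nonneg (Nat.fib n) : (0 : ℝ) ≤ Nat.fib n)]

lemma goldenRatio_pow_le_fib_add_two (n : ℕ) : φ ^ n ≤ Nat.fib (n + 2) := by
  have hψ : -1 < ψ := neg_one_lt_goldenConj
  have hbinet := fib_succ_sub_goldenConj_mul_fib n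
  have hfib : (Nat.fib (n + 2) : ℝ) = Nat.fib n + Nat.fib (n + 1) := by
    exact_mod_cast Nat.fib_add_two
  nlinarith [(Nat.cast_nonneg (Nat.fib n) : (0 : ℝ) ≤ Nat.fib n)]

lemma goldenRatio_pow_rpow_logb_two (n : ℕ) : (φ ^ n) ^ logb φ 2 = 2 ^ n := by
  rw [← rpow_natCast, ← rpow_mul goldenRatio_pos.le, mul_comm, rpow_mul goldenRatio_pos.le,
    rpow_logb goldenRatio_pos one_lt_goldenRatio.ne' two_pos, rpow_natCast]

lemma logb_goldenRatio_two_pos : 0 < logb φ 2 := logb_pos one_lt_goldenRatio one_lt_two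

lemma two_pow_le_rpow_of_fib_le {k n : ℕ} (h : Nat.fib (k + 2) ≤ n) :
    (2 : ℝ) ^ k ≤ (n : ℝ) ^ logb φ 2 := by
  rw [← goldenRatio_pow_rpow_logb_two]
  refine rpow_le_rpow (by positivity) ?_ logb_goldenRatio_two_pos.le
  exact (goldenRatio_pow_le_fib_add_two k).trans (by exact_mod_cast h)

lemma rpow_le_two_pow_of_le_fib {k n : ℕ} (h : n ≤ Nat.fib (k + 1)) :
    (n : ℝ) ^ logb φ 2 ≤ 2 ^ k := by
  rw [← goldenRatio_pow_rpow_logb_two]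
  refine rpow_le_rpow (by positivity) ?_ logb_goldenRatio_two_pos.le
  exact (Nat.cast_le.2 h).trans (fib_succ_le_goldenRatio_pow k)

noncomputable def normalizedR (n : ℕ) : ℝ := R n / (n : ℝ) ^ logb φ 2

lemma normalizedR_nonneg (n : ℕ) : 0 ≤ normalizedR n := by
  unfold normalizedR; positivity

lemma sum_normalizedR_Ico_fib_le_two (k : ℕ) :
    ∑ n ∈ Ico (Nat.fib (k + 2)) (Nat.fib (k + 3)), normalizedR n ≤ 2 := by
  calc ∑ n ∈ Ico (Nat.fib (k + 2)) (Nat.fib (k + 3)), normalizedR n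
      ≤ ∑ n ∈ Ico (Nat.fib (k + 2)) (Nat.fib (k + 3)), (R n : ℝ) / 2 ^ k :=
        sum_le_sum fun n hn => div_le_div_of_nonneg_left (Nat.cast_nonneg _) (by positivity)
          (two_pow_le_rpow_of_fib_le (mem_Ico.1 hn).1)
    _ ≤ 2 ^ (k + 1) / 2 ^ k := by
        rw [← sum_div]
        gcongr
        exact_mod_cast sum_R_Ico_fib_le_two_pow k
    _ = 2 := by rw [pow_succ]; field_simp

lemma one_div_sixteen_le_sum_normalizedR_Ico_fib (k : ℕ) :
    1 / 16 ≤ ∑ n ∈ Ico (Nat.fib (k + 4)) (Nat.fib (k + 5)), normalizedR n := by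
  calc (1 : ℝ) / 16 = 2 ^ k / 2 ^ (k + 4) := by rw [pow_add]; field_simp; norm_num
    _ ≤ (∑ n ∈ Ico (Nat.fib (k + 4)) (Nat.fib (k + 5)), (R n : ℝ)) / 2 ^ (k + 4) := by
        gcongr
        exact_mod_cast two_pow_le_sum_R_Ico_fib k
    _ ≤ ∑ n ∈ Ico (Nat.fib (k + 4)) (Nat.fib (k + 5)), normalizedR n := by
        rw [sum_div]
        refine sum_le_sum fun n hn => ?_
        have hn := mem_Ico.1 hn
        have hpos : 0 < n := (Nat.fib_pos.2 (by omega)).trans_le hn.1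
        exact div_le_div_of_nonneg_left (Nat.cast_nonneg _) (by positivity)
          (rpow_le_two_pow_of_le_fib hn.2.le)

lemma sum_normalizedR_Icc_le {k H : ℕ} (hH : H < Nat.fib (k + 3)) :
    ∑ n ∈ Icc 1 H, normalizedR n ≤ 2 * (k + 1) := by
  calc ∑ n ∈ Icc 1 H, normalizedR n ≤ ∑ n ∈ Ico (Nat.fib 2) (Nat.fib (k + 3)), normalizedR n :=
        sum_le_sum_of_subset_of_nonneg (fun n hn => by grind [Nat.fib_two])
          fun n _ _ => normalizedR_nonneg n
    _ = ∑ j ∈ range (k + 1), ∑ n ∈ Ico (Nat.fib (j + 2)) (Nat.fib (j + 1 + 2)), normalizedR n :=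
        sum_Ico_eq_sum_range_sum_Ico normalizedR Nat.fib_add_two_strictMono.monotone (k + 1)
    _ ≤ ∑ j ∈ range (k + 1), 2 := sum_le_sum fun j _ => sum_normalizedR_Ico_fib_le_two j
    _ = 2 * (k + 1) := by simp [mul_comm]

lemma div_sixteen_le_sum_normalizedR_Icc {k H : ℕ} (hH : Nat.fib (k + 4) ≤ H) :
    k / 16 ≤ ∑ n ∈ Icc 1 H, normalizedR n := by
  have hfib4 : 0 < Nat.fib 4 := by decide
  calc (k : ℝ) / 16 = ∑ j ∈ range k, 1 / 16 := by
        rw [sum_const, card_range, nsmul_eq_mul]; ring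
    _ ≤ ∑ j ∈ range k, ∑ n ∈ Ico (Nat.fib (j + 4)) (Nat.fib (j + 1 + 4)), normalizedR n :=
        sum_le_sum fun j _ => one_div_sixteen_le_sum_normalizedR_Ico_fib j
    _ = ∑ n ∈ Ico (Nat.fib 4) (Nat.fib (k + 4)), normalizedR n :=
        (sum_Ico_eq_sum_range_sum_Ico normalizedR (fun _ _ h => Nat.fib_mono (by omega)) k).symm
    _ ≤ ∑ n ∈ Icc 1 H, normalizedR n :=
        sum_le_sum_of_subset_of_nonneg (fun n hn => by grind)
          fun n _ _ => normalizedR_nonneg n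

lemma mul_log_goldenRatio_le_log {k H : ℕ} (h : Nat.fib (k + 2) ≤ H) : k * log φ ≤ log H := by
  rw [← log_pow]
  exact log_le_log (by positivity)
    ((goldenRatio_pow_le_fib_add_two k).trans (by exact_mod_cast h))

lemma log_le_mul_log_goldenRatio {k H : ℕ} (hH : 0 < H) (h : H ≤ Nat.fib (k + 1)) :
    log H ≤ k * log φ := by
  rw [← log_pow]
  exact log_le_log (by positivity) ((Nat.cast_le.2 h).trans (fib_succ_le_goldenRatio_pow k))

lemma average_normalizedR_mem_Icc {k H : ℕ} (hk : 4 ≤ k) (hkH : Nat.fib (k + 4) ≤ H)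
    (hHk : H < Nat.fib (k + 5)) :
    (log H)⁻¹ * ∑ n ∈ Icc 1 H, normalizedR n ∈ Set.Icc (1 / (32 * log φ)) (3 / log φ) := by
  have hlogφ : 0 < log φ := log_pos one_lt_goldenRatio
  have hsum_le := sum_normalizedR_Icc_le (k := k + 2) hHk
  have hsum_ge := div_sixteen_le_sum_normalizedR_Icc hkH
  have hlog_ge := mul_log_goldenRatio_le_log (k := k + 2) hkH
  have hlog_le := log_le_mul_log_goldenRatio (k := k + 4)
    ((Nat.fib_pos.2 (by omega)).trans_le hkH) hHk.le
  have hk' : (4 : ℝ) ≤ k := by exact_mod_cast hk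
  push_cast at hsum_le hlog_ge hlog_le
  have hlogH : 0 < log H := lt_of_lt_of_le (by positivity) hlog_ge
  rw [inv_mul_eq_div, Set.mem_Icc, div_le_div_iff₀ (by positivity) hlogH,
    div_le_div_iff₀ hlogH hlogφ]
  constructor <;> nlinarith

lemma eventually_average_normalizedR_mem_Icc :
    ∀ᶠ H : ℕ in atTop,
      (log H)⁻¹ * ∑ n ∈ Icc 1 H, normalizedR n ∈ Set.Icc (1 / (32 * log φ)) (3 / log φ) := by
  filter_upwards [eventually_ge_atTop (Nat.fib 8)] with H hH
  have hk : 8 ≤ Nat.greatestFib H := Nat.le_greatestFib.2 hH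
  refine average_normalizedR_mem_Icc (k := Nat.greatestFib H - 4) (by omega) ?_ ?_
  · rw [Nat.sub_add_cancel (by omega)]
    exact Nat.fib_greatestFib_le H
  · rw [show Nat.greatestFib H - 4 + 5 = Nat.greatestFib H + 1 by omega]
    exact Nat.lt_fib_greatestFib_add_one H

end Analytic

/-- The logarithmic average `B(H)` satisfies `0 < liminf B ≤ limsup B < ∞`. -/
theorem log_average_order_of_magnitude (φ lam : ℝ)
    (hφ : φ = (1 + Real.sqrt 5) / 2)
    (hlam : lam = Real.log 2 / Real.log φ)
    (B : ℕ → ℝ)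
    (hB : ∀ H : ℕ, 2 ≤ H →
      B H = (Real.log H)⁻¹ * ∑ n ∈ Finset.Icc 1 H, (R n : ℝ) / (n : ℝ) ^ lam) :
    0 < liminf (fun H : ℕ => (B H : EReal)) atTop ∧
    liminf (fun H : ℕ => (B H : EReal)) atTop ≤
      limsup (fun H : ℕ => (B H : EReal)) atTop ∧
    limsup (fun H : ℕ => (B H : EReal)) atTop < ⊤ := by
  have hB_eq : ∀ H : ℕ, 2 ≤ H → B H = (Real.log H)⁻¹ * ∑ n ∈ Icc 1 H, normalizedR n := by
    intro H hH
    rw [hB H hH, hlam, hφ]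
    rfl
  have hB_mem : ∀ᶠ H : ℕ in atTop,
      B H ∈ Set.Icc (1 / (32 * Real.log Real.goldenRatio)) (3 / Real.log Real.goldenRatio) := by
    filter_upwards [eventually_ge_atTop 2, eventually_average_normalizedR_mem_Icc] with H hH havg
    rwa [hB_eq H hH]
  exact liminf_pos_and_limsup_lt_top_of_eventually_mem_Icc
    (one_div_pos.2 (mul_pos (by norm_num) (Real.log_pos Real.one_lt_goldenRatio))) hB_mem
end
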